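/- In synthetic dataset B with a single coordinate, the correlation between x and y equals 1/√(1 + σ²(p + k(1-p))); in particular, for fixed σ² and k > 1, the correlation is strictly increasing in p. -/

import Mathlib

/-!
Conditionally on `y = s`, `x` switches, by an independent Bernoulli(`p`) coin `b`, between
`n ~ N(s, σ²)` and `n̄ ~ N(s, kσ²)`. Independence of `b` from `n` and `n̄` gives
`E[x | s] = s` and, since `b² = b` and `b (1 - b) = 0`,
`E[x² | s] = s² + p σ² + (1 - p) k σ²`. Averaging over the two equally likely labels with
`s² = 1` yields `E[xy] = 1`, `E[x²] = 1 + σ²(p + k(1 - p))` and `E[y²] = 1`. Since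
`p + k(1 - p) = k - (k - 1) p`, the correlation increases with `p` when `k > 1`.
-/

open MeasureTheory ProbabilityTheory Set
open scoped NNReal ENNReal

lemma strictMonoOn_one_div_sqrt_one_add_mul {σ k : ℝ} (hσ : 0 < σ) (hk : 1 < k) :
    StrictMonoOn (fun p ↦ 1 / √(1 + σ * (p + k * (1 - p)))) (Iic 1) := by
  intro p _ q hq hpq
  have hq_pos : 0 < 1 + σ * (q + k * (1 - q)) := by
    have : 0 ≤ (k - 1) * (1 - q) := mul_nonneg (by linarith) (by simpa using hq)
    nlinarith
  have hlt : 1 + σ * (q + k * (1 - q)) < 1 + σ * (p + k * (1 - p)) := by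
    nlinarith [mul_pos hσ (mul_pos (sub_pos.2 hk) (sub_pos.2 hpq))]
  exact one_div_lt_one_div_of_lt (Real.sqrt_pos.2 hq_pos) (Real.sqrt_lt_sqrt hq_pos.le hlt)

namespace ProbabilityTheory

variable {Ω : Type*} {mΩ : MeasurableSpace Ω}

section Gaussian

variable {P : Measure Ω} {X : Ω → ℝ} {m : ℝ} {v : ℝ≥0}

lemma HasLaw.memLp_of_gaussianReal (hX : HasLaw X (gaussianReal m v) P) (q : ℝ≥0) :
    MemLp X q P :=
  (memLp_map_measure_iff aestronglyMeasurable_id hX.aemeasurable).1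
    (hX.map_eq ▸ memLp_id_gaussianReal q)

lemma HasLaw.integral_sq_of_gaussianReal (hX : HasLaw X (gaussianReal m v) P) :
    ∫ ω, X ω ^ 2 ∂P = m ^ 2 + v := by
  have := hX.isProbabilityMeasure
  have hvar := variance_eq_sub (hX.memLp_of_gaussianReal 2)
  rw [hX.variance_eq, variance_id_gaussianReal, hX.integral_eq, integral_id_gaussianReal] at hvar
  simp only [Pi.pow_apply] at hvar
  linarith

lemma HasLaw.integrable_of_gaussianReal (hX : HasLaw X (gaussianReal m v) P) :
    Integrable X P :=
  have := hX.isProbabilityMeasure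
  (hX.memLp_of_gaussianReal 1).integrable le_rfl

lemma HasLaw.integrable_sq_of_gaussianReal (hX : HasLaw X (gaussianReal m v) P) :
    Integrable (fun ω ↦ X ω ^ 2) P :=
  have := hX.isProbabilityMeasure
  (hX.memLp_of_gaussianReal 2).integrable_sq

end Gaussian

noncomputable def bernoulliReal (p : ℝ) : Measure ℝ :=
  ENNReal.ofReal p • Measure.dirac 1 + ENNReal.ofReal (1 - p) • Measure.dirac 0

lemma ae_eq_zero_or_eq_one_bernoulliReal (p : ℝ) :
    ∀ᵐ x ∂bernoulliReal p, x = 0 ∨ x = 1 := by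
  refine ae_add_measure_iff.2 ⟨Measure.ae_smul_measure ?_ _, Measure.ae_smul_measure ?_ _⟩
  all_goals simp

lemma integral_id_bernoulliReal {p : ℝ} (hp : 0 ≤ p) : ∫ x, x ∂bernoulliReal p = p := by
  rw [bernoulliReal, integral_add_measure, integral_smul_measure, integral_smul_measure]
  · simp [hp]
  all_goals exact (integrable_dirac (by simp)).smul_measure ENNReal.ofReal_ne_top

section Bernoulli

variable {ν : Measure Ω} {B F G : Ω → ℝ} {p : ℝ}

lemma HasLaw.ae_eq_zero_or_eq_one (hB : HasLaw B (bernoulliReal p) ν) :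
    ∀ᵐ ω ∂ν, B ω = 0 ∨ B ω = 1 :=
  ae_of_ae_map hB.aemeasurable (hB.map_eq ▸ ae_eq_zero_or_eq_one_bernoulliReal p)

lemma HasLaw.integrable_of_bernoulliReal [IsFiniteMeasure ν]
    (hB : HasLaw B (bernoulliReal p) ν) : Integrable B ν := by
  refine .of_bound hB.aemeasurable.aestronglyMeasurable 1 ?_
  filter_upwards [hB.ae_eq_zero_or_eq_one] with ω hω
  rcases hω with hω | hω <;> simp [hω]

lemma HasLaw.integral_of_bernoulliReal (hB : HasLaw B (bernoulliReal p) ν) (hp : 0 ≤ p) :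
    ∫ ω, B ω ∂ν = p := by
  rw [← integral_id_bernoulliReal hp, ← hB.integral_eq]

lemma HasLaw.mul_add_one_sub_mul_sq_ae_eq (hB : HasLaw B (bernoulliReal p) ν) :
    (fun ω ↦ (B ω * F ω + (1 - B ω) * G ω) ^ 2) =ᵐ[ν]
      fun ω ↦ B ω * F ω ^ 2 + (1 - B ω) * G ω ^ 2 := by
  filter_upwards [hB.ae_eq_zero_or_eq_one] with ω hω
  rcases hω with hω | hω <;> simp [hω]

end Bernoulli

section Mixture

variable {ν : Measure Ω} [IsProbabilityMeasure ν] {B F G : Ω → ℝ}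

lemma IndepFun.integrable_mul_add_one_sub_mul (hF : IndepFun B F ν) (hG : IndepFun B G ν)
    (hB : Integrable B ν) (hFi : Integrable F ν) (hGi : Integrable G ν) :
    Integrable (fun ω ↦ B ω * F ω + (1 - B ω) * G ω) ν :=
  (hF.integrable_mul hB hFi).add <|
    (hG.comp (measurable_const.sub measurable_id) measurable_id).integrable_mul
      ((integrable_const 1).sub hB) hGi

lemma IndepFun.integral_mul_add_one_sub_mul (hF : IndepFun B F ν) (hG : IndepFun B G ν)
    (hB : Integrable B ν) (hFi : Integrable F ν) (hGi : Integrable G ν) :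
    ∫ ω, B ω * F ω + (1 - B ω) * G ω ∂ν =
      (∫ ω, B ω ∂ν) * (∫ ω, F ω ∂ν) + (1 - ∫ ω, B ω ∂ν) * ∫ ω, G ω ∂ν := by
  have hG' : IndepFun (fun ω ↦ 1 - B ω) G ν :=
    hG.comp (measurable_const.sub measurable_id) measurable_id
  have h1B : Integrable (fun ω ↦ 1 - B ω) ν := (integrable_const 1).sub hB
  have hBF : Integrable (fun ω ↦ B ω * F ω) ν := hF.integrable_mul hB hFi
  have hBG : Integrable (fun ω ↦ (1 - B ω) * G ω) ν := hG'.integrable_mul h1B hGi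
  rw [integral_add hBF hBG, hF.integral_fun_mul_eq_mul_integral hB.1 hFi.1,
    hG'.integral_fun_mul_eq_mul_integral h1B.1 hGi.1, integral_sub (integrable_const 1) hB]
  simp

end Mixture

section GaussianMixture

variable {ν : Measure Ω} [IsProbabilityMeasure ν] {b n n' : Ω → ℝ} {p m : ℝ} {v w : ℝ≥0}

lemma integrable_mul_add_one_sub_mul_of_gaussianReal (hb : HasLaw b (bernoulliReal p) ν)
    (hn : HasLaw n (gaussianReal m v) ν) (hn' : HasLaw n' (gaussianReal m w) ν)
    (hbn : IndepFun b n ν) (hbn' : IndepFun b n' ν) :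
    Integrable (fun ω ↦ b ω * n ω + (1 - b ω) * n' ω) ν :=
  hbn.integrable_mul_add_one_sub_mul hbn' hb.integrable_of_bernoulliReal
    hn.integrable_of_gaussianReal hn'.integrable_of_gaussianReal

lemma integral_mul_add_one_sub_mul_of_gaussianReal (hb : HasLaw b (bernoulliReal p) ν)
    (hp : 0 ≤ p) (hn : HasLaw n (gaussianReal m v) ν) (hn' : HasLaw n' (gaussianReal m w) ν)
    (hbn : IndepFun b n ν) (hbn' : IndepFun b n' ν) :
    ∫ ω, b ω * n ω + (1 - b ω) * n' ω ∂ν = m := by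
  rw [hbn.integral_mul_add_one_sub_mul hbn' hb.integrable_of_bernoulliReal
    hn.integrable_of_gaussianReal hn'.integrable_of_gaussianReal,
    hb.integral_of_bernoulliReal hp, hn.integral_eq, hn'.integral_eq, integral_id_gaussianReal,
    integral_id_gaussianReal]
  ring

lemma integrable_mul_add_one_sub_mul_sq_of_gaussianReal (hb : HasLaw b (bernoulliReal p) ν)
    (hn : HasLaw n (gaussianReal m v) ν) (hn' : HasLaw n' (gaussianReal m w) ν)
    (hbn : IndepFun b n ν) (hbn' : IndepFun b n' ν) :
    Integrable (fun ω ↦ (b ω * n ω + (1 - b ω) * n' ω) ^ 2) ν := by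
  have hbn2 : IndepFun b (fun ω ↦ n ω ^ 2) ν := hbn.comp measurable_id (measurable_id.pow_const 2)
  have hbn2' : IndepFun b (fun ω ↦ n' ω ^ 2) ν :=
    hbn'.comp measurable_id (measurable_id.pow_const 2)
  exact .congr (hbn2.integrable_mul_add_one_sub_mul hbn2' hb.integrable_of_bernoulliReal
    hn.integrable_sq_of_gaussianReal hn'.integrable_sq_of_gaussianReal)
    hb.mul_add_one_sub_mul_sq_ae_eq.symm

lemma integral_mul_add_one_sub_mul_sq_of_gaussianReal (hb : HasLaw b (bernoulliReal p) ν)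
    (hp : 0 ≤ p) (hn : HasLaw n (gaussianReal m v) ν) (hn' : HasLaw n' (gaussianReal m w) ν)
    (hbn : IndepFun b n ν) (hbn' : IndepFun b n' ν) :
    ∫ ω, (b ω * n ω + (1 - b ω) * n' ω) ^ 2 ∂ν = m ^ 2 + p * v + (1 - p) * w := by
  have hbn2 : IndepFun b (fun ω ↦ n ω ^ 2) ν := hbn.comp measurable_id (measurable_id.pow_const 2)
  have hbn2' : IndepFun b (fun ω ↦ n' ω ^ 2) ν :=
    hbn'.comp measurable_id (measurable_id.pow_const 2)
  rw [integral_congr_ae hb.mul_add_one_sub_mul_sq_ae_eq,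
    hbn2.integral_mul_add_one_sub_mul hbn2' hb.integrable_of_bernoulliReal
      hn.integrable_sq_of_gaussianReal hn'.integrable_sq_of_gaussianReal,
    hb.integral_of_bernoulliReal hp, hn.integral_sq_of_gaussianReal,
    hn'.integral_sq_of_gaussianReal]
  ring

end GaussianMixture

lemma integral_mixture_mul_label_and_sq {ν : Measure Ω} {x y b n n' : Ω → ℝ} {s p : ℝ}
    {v w : ℝ≥0} (hs : s ^ 2 = 1) (hp : 0 ≤ p) (hbm : Measurable b) (hnm : Measurable n) (hn'm : Measurable n')
    (hy : ∀ᵐ ω ∂ν, y ω = s) (hx : ∀ ω, x ω = b ω * n ω + (1 - b ω) * n' ω)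
    (hb : ν.map b = bernoulliReal p) (hn : ν.map n = gaussianReal s v)
    (hn' : ν.map n' = gaussianReal s w) (hind : iIndepFun ![b, n, n'] ν) :
    Integrable (fun ω ↦ x ω * y ω) ν ∧ ∫ ω, x ω * y ω ∂ν = 1 ∧
      Integrable (fun ω ↦ x ω ^ 2) ν ∧ ∫ ω, x ω ^ 2 ∂ν = 1 + p * v + (1 - p) * w := by
  have hbL : HasLaw b (bernoulliReal p) ν := ⟨hbm.aemeasurable, hb⟩
  have hnL : HasLaw n (gaussianReal s v) ν := ⟨hnm.aemeasurable, hn⟩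
  have hn'L : HasLaw n' (gaussianReal s w) ν := ⟨hn'm.aemeasurable, hn'⟩
  have := hnL.isProbabilityMeasure
  have hbn : IndepFun b n ν := hind.indepFun (i := 0) (j := 1) (by decide)
  have hbn' : IndepFun b n' ν := hind.indepFun (i := 0) (j := 2) (by decide)
  have hxy : (fun ω ↦ x ω * y ω) =ᵐ[ν] fun ω ↦ s * x ω := by
    filter_upwards [hy] with ω hω
    rw [hω, mul_comm]
  obtain rfl : x = fun ω ↦ b ω * n ω + (1 - b ω) * n' ω := funext hx
  refine ⟨((integrable_mul_add_one_sub_mul_of_gaussianReal hbL hnL hn'L hbn hbn').const_mul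
    s).congr hxy.symm, ?_,
    integrable_mul_add_one_sub_mul_sq_of_gaussianReal hbL hnL hn'L hbn hbn', ?_⟩
  · rw [integral_congr_ae hxy, integral_const_mul,
      integral_mul_add_one_sub_mul_of_gaussianReal hbL hp hnL hn'L hbn hbn', ← sq, hs]
  · rw [integral_mul_add_one_sub_mul_sq_of_gaussianReal hbL hp hnL hn'L hbn hbn', hs]

section TotalExpectation

variable {μ : Measure Ω} [IsFiniteMeasure μ] {s : Set Ω}

lemma measure_smul_cond_add_measure_smul_cond_compl (hs : MeasurableSet s) :
    μ s • μ[|s] + μ sᶜ • μ[|sᶜ] = μ := by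
  ext t
  simp only [Measure.coe_add, Measure.coe_smul, Pi.add_apply, Pi.smul_apply, smul_eq_mul]
  rw [mul_comm (μ s), mul_comm (μ sᶜ), cond_add_cond_compl_eq hs]

lemma integral_eq_measureReal_mul_integral_cond_add (hs : MeasurableSet s) {f : Ω → ℝ}
    (hf : Integrable f μ[|s]) (hf' : Integrable f μ[|sᶜ]) :
    ∫ ω, f ω ∂μ = μ.real s * ∫ ω, f ω ∂μ[|s] + μ.real sᶜ * ∫ ω, f ω ∂μ[|sᶜ] := by
  conv_lhs => rw [← measure_smul_cond_add_measure_smul_cond_compl (μ := μ) hs]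
  rw [integral_add_measure (hf.smul_measure (measure_ne_top μ s))
    (hf'.smul_measure (measure_ne_top μ sᶜ)), integral_smul_measure, integral_smul_measure]
  rfl

lemma integral_eq_add_integral_cond_div_two {μ : Measure Ω} [IsProbabilityMeasure μ]
    {y : Ω → ℝ} (hym : Measurable y) (hyval : ∀ ω, y ω = 1 ∨ y ω = -1)
    (hyunif : μ {ω | y ω = 1} = 1 / 2) {f : Ω → ℝ} (hf : Integrable f μ[|{ω | y ω = 1}])
    (hf' : Integrable f μ[|{ω | y ω = -1}]) :
    ∫ ω, f ω ∂μ = (∫ ω, f ω ∂μ[|{ω | y ω = 1}] + ∫ ω, f ω ∂μ[|{ω | y ω = -1}]) / 2 := by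
  have hA : MeasurableSet {ω | y ω = 1} := hym (measurableSet_singleton 1)
  have hAc : {ω | y ω = 1}ᶜ = {ω | y ω = -1} := by
    ext ω
    rcases hyval ω with h | h <;> simp [h] <;> norm_num
  have hμA : μ.real {ω | y ω = 1} = 1 / 2 := by simp [measureReal_def, hyunif]
  have hμAc : μ.real {ω | y ω = 1}ᶜ = 1 / 2 := by
    rw [probReal_compl_eq_one_sub hA, hμA]; norm_num
  rw [integral_eq_measureReal_mul_integral_cond_add hA hf (hAc ▸ hf'), hμA, hμAc, hAc]
  ring

end TotalExpectation

end ProbabilityTheory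

theorem stmt18_general {Ω : Type*} [MeasurableSpace Ω] (μ : Measure Ω) [IsProbabilityMeasure μ]
    (y b n nb x : Ω → ℝ) (p : ℝ) (σ2 k : NNReal)
    (hp : p ∈ Set.Icc (0:ℝ) 1) (hσ : 0 < σ2)
    (hym : Measurable y) (hbm : Measurable b) (hnm : Measurable n) (hnbm : Measurable nb)
    (hyval : ∀ ω, y ω = 1 ∨ y ω = -1)
    (hyunif : μ {ω | y ω = 1} = 1/2)
    (hx : ∀ ω, x ω = b ω * n ω + (1 - b ω) * nb ω)
    (hb : ∀ s : ℝ, s = 1 ∨ s = -1 →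
      Measure.map b (μ[|{ω | y ω = s}]) =
        ENNReal.ofReal p • Measure.dirac (1:ℝ) + ENNReal.ofReal (1 - p) • Measure.dirac (0:ℝ))
    (hn : ∀ s : ℝ, s = 1 ∨ s = -1 →
      Measure.map n (μ[|{ω | y ω = s}]) = gaussianReal s σ2)
    (hnb : ∀ s : ℝ, s = 1 ∨ s = -1 →
      Measure.map nb (μ[|{ω | y ω = s}]) = gaussianReal s (k * σ2))
    (hindep : ∀ s : ℝ, s = 1 ∨ s = -1 →
      iIndepFun (m := fun _ : Fin 3 => (inferInstance : MeasurableSpace ℝ)) ![b, n, nb]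
        (μ[|{ω | y ω = s}])) :
    ((∫ ω, x ω * y ω ∂μ) /
      Real.sqrt ((∫ ω, (x ω)^2 ∂μ) * (∫ ω, (y ω)^2 ∂μ)) =
        1 / Real.sqrt (1 + (σ2:ℝ) * (p + (k:ℝ) * (1 - p)))) ∧
    ((1:ℝ) < k → ∀ p1 p2 : ℝ, 0 ≤ p1 → p1 < p2 → p2 ≤ 1 →
      1 / Real.sqrt (1 + (σ2:ℝ) * (p1 + (k:ℝ) * (1 - p1))) <
        1 / Real.sqrt (1 + (σ2:ℝ) * (p2 + (k:ℝ) * (1 - p2)))) := by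
  refine ⟨?_, fun hk p1 p2 _ h12 hp2 ↦
    strictMonoOn_one_div_sqrt_one_add_mul hσ hk (h12.le.trans hp2) hp2 h12⟩
  have hcond (s : ℝ) (hs : s = 1 ∨ s = -1) :=
    integral_mixture_mul_label_and_sq (ν := μ[|{ω | y ω = s}])
      (by rcases hs with rfl | rfl <;> norm_num) hp.1 hbm hnm hnbm
      (ae_cond_mem (hym (measurableSet_singleton s))) hx (hb s hs) (hn s hs) (hnb s hs)
      (hindep s hs)
  obtain ⟨hxy1, hExy1, hx1, hEx1⟩ := hcond 1 (.inl rfl)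
  obtain ⟨hxy2, hExy2, hx2, hEx2⟩ := hcond (-1) (.inr rfl)
  have hy2 : (fun ω ↦ y ω ^ 2) = fun _ ↦ 1 := funext fun ω ↦ by
    rcases hyval ω with h | h <;> simp [h]
  rw [integral_eq_add_integral_cond_div_two hym hyval hyunif hxy1 hxy2, hExy1, hExy2,
    integral_eq_add_integral_cond_div_two hym hyval hyunif hx1 hx2, hEx1, hEx2, hy2]
  simp only [integral_const, probReal_univ, smul_eq_mul, mul_one, NNReal.coe_mul]
  ring_nf

theorem stmt18 {Ω : Type*} [MeasurableSpace Ω] (μ : Measure Ω) [IsProbabilityMeasure μ]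
    (y b n nb x : Ω → ℝ) (p : ℝ) (σ2 k : NNReal)
    (hp : p ∈ Set.Icc (0:ℝ) 1) (hσ : 0 < σ2) (hk : 0 < k)
    (hym : Measurable y) (hbm : Measurable b) (hnm : Measurable n) (hnbm : Measurable nb)
    (hyval : ∀ ω, y ω = 1 ∨ y ω = -1)
    (hyunif : μ {ω | y ω = 1} = 1/2)
    (hx : ∀ ω, x ω = b ω * n ω + (1 - b ω) * nb ω)
    (hb : ∀ s : ℝ, s = 1 ∨ s = -1 →
      Measure.map b (μ[|{ω | y ω = s}]) =
        ENNReal.ofReal p • Measure.dirac (1:ℝ) + ENNReal.ofReal (1 - p) • Measure.dirac (0:ℝ))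
    (hn : ∀ s : ℝ, s = 1 ∨ s = -1 →
      Measure.map n (μ[|{ω | y ω = s}]) = gaussianReal s σ2)
    (hnb : ∀ s : ℝ, s = 1 ∨ s = -1 →
      Measure.map nb (μ[|{ω | y ω = s}]) = gaussianReal s (k * σ2))
    (hindep : ∀ s : ℝ, s = 1 ∨ s = -1 →
      iIndepFun (m := fun _ : Fin 3 => (inferInstance : MeasurableSpace ℝ)) ![b, n, nb]
        (μ[|{ω | y ω = s}])) :
    ((∫ ω, x ω * y ω ∂μ) /
      Real.sqrt ((∫ ω, (x ω)^2 ∂μ) * (∫ ω, (y ω)^2 ∂μ)) =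
        1 / Real.sqrt (1 + (σ2:ℝ) * (p + (k:ℝ) * (1 - p)))) ∧
    ((1:ℝ) < k → ∀ p1 p2 : ℝ, 0 ≤ p1 → p1 < p2 → p2 ≤ 1 →
      1 / Real.sqrt (1 + (σ2:ℝ) * (p1 + (k:ℝ) * (1 - p1))) <
        1 / Real.sqrt (1 + (σ2:ℝ) * (p2 + (k:ℝ) * (1 - p2)))) :=
  stmt18_general μ y b n nb x p σ2 k hp hσ hym hbm hnm hnbm hyval hyunif hx hb hn hnb hindep
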